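/- arXiv:2302.13798 — 3 statements merged into one kernel-verified Lean document; each statement's English description precedes it below -/
import Mathlib

section
/- With the setup of the transfer-distance d(f,f') between maximal flows: for a maximal flow f, the residual graph G_f (with arc weights −1 on residual arcs corresponding to arcs of X where f and f' differ, +1 on residual arcs corresponding to arcs of X where they agree, 0 otherwise) contains a directed simple cycle of strictly negative total weight if and only if there exists a maximal flow f* in G with d(f*, f') < d(f, f'). -/
open Finset

variable {V : Type*} [Fintype V] [DecidableEq V]

/-- An integral (nonnegative) flow with source `s`, sink `t`, capacities `c`. -/
def IsZFlow (c : V → V → ℤ) (s t : V) (f : V → V → ℤ) : Prop :=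
  (∀ u v, 0 ≤ f u v) ∧ (∀ u v, f u v ≤ c u v) ∧
    ∀ v, v ≠ s → v ≠ t → ∑ u, f v u = ∑ u, f u v

/-- The value of a flow: net flow out of the source. -/
def zvalue (f : V → V → ℤ) (s : V) : ℤ := ∑ u, f s u - ∑ u, f u s

/-- A maximal flow. -/
def IsZMaxFlow (c : V → V → ℤ) (s t : V) (f : V → V → ℤ) : Prop :=
  IsZFlow c s t f ∧ ∀ g, IsZFlow c s t g → zvalue g s ≤ zvalue f s

/-- Push one unit of flow along one residual step `(a, b, dir)`:
a residual arc from `a` to `b`; if `dir = true` it is a forward copy of the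
arc `(a,b)` (flow increases by 1), otherwise it is the backward copy of the
arc `(b,a)` (flow decreases by 1). -/
def push1 (f : V → V → ℤ) (e : V × V × Bool) : V → V → ℤ :=
  fun u v =>
    if e.2.2 then (if u = e.1 ∧ v = e.2.1 then f u v + 1 else f u v)
    else (if u = e.2.1 ∧ v = e.1 then f u v - 1 else f u v)

/-- Push one unit of flow along a residual cycle. -/
def push (f : V → V → ℤ) (g : List (V × V × Bool)) : V → V → ℤ :=
  g.foldl push1 f

/-- `g` is a simple cycle in the residual graph `G_f`: a nonempty list of
residual steps, with pairwise distinct start vertices, cyclically chained,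
where forward steps use unsaturated arcs and backward steps use arcs
carrying positive flow. -/
def ResidualCycle (c f : V → V → ℤ) (g : List (V × V × Bool)) : Prop :=
  g ≠ [] ∧ (g.map fun e => e.1).Nodup ∧
    (∀ i : Fin g.length,
      (g.get i).2.1 = (g.get ⟨((i : ℕ) + 1) % g.length, Nat.mod_lt _ i.pos⟩).1) ∧
    ∀ e ∈ g, if e.2.2 then f e.1 e.2.1 < c e.1 e.2.1 else 0 < f e.2.1 e.1

/-- The underlying arc of a residual step. -/
def arcOf (e : V × V × Bool) : V × V := if e.2.2 then (e.1, e.2.1) else (e.2.1, e.1)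

/-- The weight of a residual cycle relative to the reference flow `fp`:
`-1` on steps over arcs of `X` where `f` and `fp` differ, `+1` on steps over
arcs of `X` where they agree, `0` elsewhere. -/
def cycleWeight (X : Finset (V × V)) (f fp : V → V → ℤ) (g : List (V × V × Bool)) : ℤ :=
  (g.map fun e =>
    if arcOf e ∈ X then
      (if f (arcOf e).1 (arcOf e).2 ≠ fp (arcOf e).1 (arcOf e).2 then (-1 : ℤ) else 1)
    else 0).sum

/-- The transfer distance: number of arcs of `X` where the two flows differ. -/
def dist (X : Finset (V × V)) (f fp : V → V → ℤ) : ℕ :=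
  (X.filter fun e => f e.1 e.2 ≠ fp e.1 e.2).card

/-!
Pushing a unit of flow along a residual cycle `g` adds the circulation `cycleFlow g` to `f`. Since
the arcs of `X` have capacity one, a feasible change `h` of `f` flips every arc `a ∈ X` it touches
between `0` and `1`, and then `(1 - 2 f a) h a = 1`. So `dist X (f + h) f' - dist X f f'` is the
linear functional `cost h = ∑_{a ∈ X} w a (1 - 2 f a) h a`, where `w a = ±1` is the residual weight
of `a`, and `cost (cycleFlow g)` is the weight of `g`. A negative cycle therefore yields a closer
maximal flow. Conversely, if `f*` is a closer maximal flow, `h = f* - f` is a circulation with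
`cost h < 0`; peeling off simple cycles of `G_f` conformal to `h` (flow decomposition), whose costs
add up to `cost h` by linearity, produces one of negative cost.
-/

theorem Function.exists_iterate_mem_periodicPts {α : Type*} [Finite α] (f : α → α) (x : α) :
    ∃ m, f^[m] x ∈ Function.periodicPts f := by
  obtain ⟨m, n, hmn, hne⟩ : ∃ m n, f^[m] x = f^[n] x ∧ m ≠ n := by
    simpa [Function.Injective] using not_injective_infinite_finite (f^[·] x)
  rcases lt_or_gt_of_ne hne with hlt | hlt
  · refine ⟨m, Function.mk_mem_periodicPts (n := n - m) (by omega) ?_⟩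
    rw [Function.IsPeriodicPt, Function.IsFixedPt, ← Function.iterate_add_apply,
      Nat.sub_add_cancel hlt.le, hmn]
  · refine ⟨n, Function.mk_mem_periodicPts (n := m - n) (by omega) ?_⟩
    rw [Function.IsPeriodicPt, Function.IsFixedPt, ← Function.iterate_add_apply,
      Nat.sub_add_cancel hlt.le, hmn]

theorem List.sum_map_sub {ι M : Type*} [AddCommGroup M] (l : List ι) (f g : ι → M) :
    (l.map fun i => f i - g i).sum = (l.map f).sum - (l.map g).sum := by
  induction l with
  | nil => simp
  | cons i l ih => simp only [List.map_cons, List.sum_cons, ih]; abel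

section Circulation

omit [DecidableEq V]

def netOut : (V → V → ℤ) →+ V → ℤ where
  toFun φ v := ∑ u, φ v u - ∑ u, φ u v
  map_zero' := by ext; simp
  map_add' φ ψ := by ext; simp only [Pi.add_apply, sum_add_distrib]; ring

lemma zvalue_eq_netOut (f : V → V → ℤ) (s : V) : zvalue f s = netOut f s := rfl

lemma IsZFlow.netOut_eq_zero {c f : V → V → ℤ} {s t v : V} (hf : IsZFlow c s t f)
    (hs : v ≠ s) (ht : v ≠ t) : netOut f v = 0 :=
  sub_eq_zero.2 (hf.2.2 v hs ht)

lemma sum_netOut (φ : V → V → ℤ) : ∑ v, netOut φ v = 0 := by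
  simp only [netOut, AddMonoidHom.coe_mk, ZeroHom.coe_mk, sum_sub_distrib]
  rw [sum_comm, sub_self]

lemma netOut_eq_zero_of_forall_ne {φ : V → V → ℤ} {t : V} (h : ∀ v ≠ t, netOut φ v = 0) :
    netOut φ t = 0 := by
  rw [← sum_netOut φ, sum_eq_single t (fun v _ hv => h v hv) (by simp)]

lemma IsZMaxFlow.netOut_sub_eq_zero {c F f : V → V → ℤ} {s t : V} (hF : IsZMaxFlow c s t F)
    (hf : IsZMaxFlow c s t f) : netOut (F - f) = 0 := by
  have hne : ∀ v ≠ t, netOut (F - f) v = 0 := by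
    intro v ht
    rw [map_sub, Pi.sub_apply, sub_eq_zero]
    by_cases hs : v = s
    · subst hs
      exact le_antisymm (hf.2 F hF.1) (hF.2 f hf.1)
    · rw [hF.1.netOut_eq_zero hs ht, hf.1.netOut_eq_zero hs ht]
  funext v
  by_cases ht : v = t
  · exact ht ▸ netOut_eq_zero_of_forall_ne hne
  · exact hne v ht

def WithinCapacity (c F : V → V → ℤ) : Prop := ∀ u v, 0 ≤ F u v ∧ F u v ≤ c u v

lemma IsZFlow.withinCapacity {c f : V → V → ℤ} {s t : V} (hf : IsZFlow c s t f) :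
    WithinCapacity c f :=
  fun u v => ⟨hf.1 u v, hf.2.1 u v⟩

end Circulation

def ResidualStep (c f : V → V → ℤ) (e : V × V × Bool) : Prop :=
  if e.2.2 then f e.1 e.2.1 < c e.1 e.2.1 else 0 < f e.2.1 e.1

def IsSimpleCycle (g : List (V × V × Bool)) : Prop :=
  g ≠ [] ∧ (g.map fun e => e.1).Nodup ∧
    ∀ i : Fin g.length,
      (g.get i).2.1 = (g.get ⟨((i : ℕ) + 1) % g.length, Nat.mod_lt _ i.pos⟩).1

def ConformalStep (h : V → V → ℤ) (e : V × V × Bool) : Prop :=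
  if e.2.2 then 0 < h e.1 e.2.1 else h e.2.1 e.1 < 0

section Cycles

omit [Fintype V] [DecidableEq V]

lemma residualCycle_iff {c f : V → V → ℤ} {g : List (V × V × Bool)} :
    ResidualCycle c f g ↔ IsSimpleCycle g ∧ ∀ e ∈ g, ResidualStep c f e := by
  simp only [ResidualCycle, IsSimpleCycle, ResidualStep, and_assoc]

lemma IsSimpleCycle.nodup {g : List (V × V × Bool)} (hg : IsSimpleCycle g) : g.Nodup :=
  hg.2.1.of_map _

lemma IsSimpleCycle.map_snd_eq_rotate {g : List (V × V × Bool)} (hg : IsSimpleCycle g) :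
    (g.map fun e => e.2.1) = (g.map fun e => e.1).rotate 1 := by
  refine List.ext_getElem (by simp) fun n h₁ _ => ?_
  rw [List.getElem_map, List.getElem_rotate, List.getElem_map]
  simpa using hg.2.2 ⟨n, by simpa using h₁⟩

lemma ConformalStep.residualStep {c f h : V → V → ℤ} (hfh : WithinCapacity c (f + h))
    {e : V × V × Bool} (he : ConformalStep h e) : ResidualStep c f e := by
  have hbd (u v : V) : 0 ≤ f u v + h u v ∧ f u v + h u v ≤ c u v := hfh u v
  rcases e with ⟨a, b, _ | _⟩ <;> simp [ConformalStep, ResidualStep] at he ⊢ <;>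
    linarith [hbd a b, hbd b a]

end Cycles

def cycleFlow (g : List (V × V × Bool)) : V → V → ℤ := (g.map (push1 0)).sum

section Push

omit [Fintype V]

lemma push1_eq_add (f : V → V → ℤ) (e : V × V × Bool) : push1 f e = f + push1 0 e := by
  ext u v
  simp only [push1, Pi.add_apply, Pi.zero_apply]
  split_ifs <;> ring

lemma push_eq_add_cycleFlow (f : V → V → ℤ) (g : List (V × V × Bool)) :
    push f g = f + cycleFlow g := by
  induction g generalizing f with
  | nil => simp [push, cycleFlow]
  | cons e g ih =>
    change push (push1 f e) g = _
    rw [ih, push1_eq_add]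
    simp [cycleFlow, add_assoc]

lemma cycleFlow_apply {g : List (V × V × Bool)} (hg : g.Nodup) (u v : V) :
    cycleFlow g u v =
      (if (u, v, true) ∈ g then 1 else 0) - (if (v, u, false) ∈ g then 1 else 0) := by
  have hstep : ∀ e : V × V × Bool, push1 0 e u v =
      (if (u, v, true) = e then 1 else 0) - (if (v, u, false) = e then 1 else 0) := by
    rintro ⟨a, b, _ | _⟩ <;> simp only [push1, Prod.mk.injEq, Pi.zero_apply] <;> split_ifs <;>
      grind
  simp only [cycleFlow, Pi.list_sum_apply, List.map_map]
  rw [← List.sum_toFinset _ hg]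
  simp only [Function.comp_apply, hstep, sum_sub_distrib, sum_ite_eq, List.mem_toFinset]

lemma withinCapacity_push {c f : V → V → ℤ} (hf : WithinCapacity c f) {g : List (V × V × Bool)}
    (hnd : g.Nodup) (hres : ∀ e ∈ g, ResidualStep c f e) : WithinCapacity c (push f g) := by
  intro u v
  have hF : (u, v, true) ∈ g → f u v < c u v := fun he => by simpa [ResidualStep] using hres _ he
  have hB : (v, u, false) ∈ g → 0 < f u v := fun he => by simpa [ResidualStep] using hres _ he
  have := hf u v
  simp only [push_eq_add_cycleFlow, Pi.add_apply, cycleFlow_apply hnd]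
  split_ifs at * <;> grind

end Push

lemma netOut_push1_zero (e : V × V × Bool) (v : V) :
    netOut (push1 0 e) v = (if e.1 = v then 1 else 0) - (if e.2.1 = v then 1 else 0) := by
  rcases e with ⟨a, b, _ | _⟩
  · simp [netOut, push1, ite_and, sum_ite_irrel, eq_comm]
    split_ifs <;> simp
  · simp [netOut, push1, ite_and, sum_ite_irrel, eq_comm]

lemma netOut_cycleFlow {g : List (V × V × Bool)} (hg : IsSimpleCycle g) :
    netOut (cycleFlow g) = 0 := by
  ext v
  have hperm := (hg.map_snd_eq_rotate ▸ List.rotate_perm _ 1).map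
    fun x => if x = v then (1 : ℤ) else 0
  simp only [List.map_map, Function.comp_def] at hperm
  simp only [cycleFlow, map_list_sum, Pi.list_sum_apply, List.map_map, Function.comp_def,
    netOut_push1_zero, List.sum_map_sub, Pi.zero_apply]
  rw [hperm.sum_eq, sub_self]

lemma netOut_push (f : V → V → ℤ) {g : List (V × V × Bool)} (hg : IsSimpleCycle g) :
    netOut (push f g) = netOut f := by
  rw [push_eq_add_cycleFlow, map_add, netOut_cycleFlow hg, add_zero]

lemma isZMaxFlow_push {c f : V → V → ℤ} {s t : V} (hf : IsZMaxFlow c s t f)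
    {g : List (V × V × Bool)} (hg : ResidualCycle c f g) : IsZMaxFlow c s t (push f g) := by
  obtain ⟨hcyc, hres⟩ := residualCycle_iff.1 hg
  have hcap := withinCapacity_push hf.1.withinCapacity hcyc.nodup hres
  have hval : zvalue (push f g) s = zvalue f s := by
    rw [zvalue_eq_netOut, zvalue_eq_netOut, netOut_push f hcyc]
  refine ⟨⟨fun u v => (hcap u v).1, fun u v => (hcap u v).2, fun v hs ht => ?_⟩,
    fun f' hf' => hval ▸ hf.2 f' hf'⟩
  rw [← sub_eq_zero]
  exact (congr_fun (netOut_push f hcyc) v).trans (hf.1.netOut_eq_zero hs ht)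

section Conformal

omit [DecidableEq V]

lemma exists_conformal_succ {h : V → V → ℤ} (hcirc : netOut h = 0) {x y : V}
    (hxy : 0 < h x y ∨ h y x < 0) : ∃ z, 0 < h y z ∨ h z y < 0 := by
  by_contra! hno
  have hbal : ∑ z, h y z = ∑ z, h z y := sub_eq_zero.1 (congr_fun hcirc y)
  have hout : ∑ z, h y z ≤ 0 := sum_nonpos fun z _ => (hno z).1
  have hin : 0 ≤ ∑ z, h z y := sum_nonneg fun z _ => (hno z).2
  rcases hxy with hxy | hyx
  · have := single_le_sum (fun z _ => (hno z).2) (mem_univ x)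
    linarith
  · have := single_le_sum (f := fun z => -h y z) (fun z _ => neg_nonneg.2 (hno z).1) (mem_univ x)
    rw [sum_neg_distrib] at this
    linarith

/-- A walk along arcs conformal to the circulation `h` never gets stuck, so a periodic orbit of a
successor map on the vertices it reaches is a simple conformal cycle. -/
lemma exists_conformal_cycle {h : V → V → ℤ} (hcirc : netOut h = 0) (hne : h ≠ 0) :
    ∃ g, IsSimpleCycle g ∧ ∀ e ∈ g, ConformalStep h e := by
  let Adj (x y : V) : Prop := 0 < h x y ∨ h y x < 0
  obtain ⟨x₀, y₀, h₀⟩ : ∃ x y, Adj x y := by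
    obtain ⟨x, y, hxy⟩ : ∃ x y, h x y ≠ 0 := by
      by_contra! H
      exact hne (funext₂ H)
    rcases hxy.lt_or_gt with hlt | hgt
    · exact ⟨y, x, Or.inr hlt⟩
    · exact ⟨x, y, Or.inl hgt⟩
  choose next hnext using fun y : {y // ∃ x, Adj x y} =>
    have ⟨z, hz⟩ := exists_conformal_succ hcirc y.2.choose_spec
    (⟨⟨z, y.1, hz⟩, hz⟩ : ∃ z : {y // ∃ x, Adj x y}, Adj y.1 z.1)
  obtain ⟨m, hm⟩ := Function.exists_iterate_mem_periodicPts next ⟨y₀, x₀, h₀⟩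
  set y := next^[m] ⟨y₀, x₀, h₀⟩
  set n := Function.minimalPeriod next y
  let w (k : ℕ) : V := (next^[k] y).1
  have hadj (k : ℕ) : Adj (w k) (w (k + 1)) := by
    simp only [w, Function.iterate_succ_apply']
    exact hnext _
  refine ⟨(List.range n).map fun k => (w k, w (k + 1), decide (0 < h (w k) (w (k + 1)))),
    ⟨?_, ?_, ?_⟩, ?_⟩
  · simpa using (Function.minimalPeriod_pos_of_mem_periodicPts hm).ne'
  · rw [List.map_map]
    refine List.nodup_range.map_on fun k hk l hl hkl => ?_
    exact Function.iterate_injOn_Iio_minimalPeriod (List.mem_range.1 hk) (List.mem_range.1 hl)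
      (Subtype.ext hkl)
  · intro i
    simp only [List.get_eq_getElem, List.getElem_map, List.getElem_range, List.length_map,
      List.length_range, w]
    rw [Function.iterate_mod_minimalPeriod_eq]
  · simp only [List.mem_map, List.mem_range, forall_exists_index, and_imp]
    rintro _ k - rfl
    by_cases hpos : 0 < h (w k) (w (k + 1))
    · simp [ConformalStep, hpos]
    · simpa [ConformalStep, hpos] using (hadj k).resolve_left hpos

end Conformal

section ConformalFlow

omit [Fintype V]

variable {h : V → V → ℤ} {g : List (V × V × Bool)}

lemma cycleFlow_apply_of_conformal (hnd : g.Nodup) (hconf : ∀ e ∈ g, ConformalStep h e)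
    (u v : V) : cycleFlow g u v = 0 ∨ (cycleFlow g u v = 1 ∧ 0 < h u v) ∨
      (cycleFlow g u v = -1 ∧ h u v < 0) := by
  have hF : (u, v, true) ∈ g → 0 < h u v := fun he => by simpa [ConformalStep] using hconf _ he
  have hB : (v, u, false) ∈ g → h u v < 0 := fun he => by simpa [ConformalStep] using hconf _ he
  rw [cycleFlow_apply hnd]
  split_ifs at * <;> grind

lemma exists_cycleFlow_ne_zero (hg : IsSimpleCycle g) (hconf : ∀ e ∈ g, ConformalStep h e) :
    ∃ u v, cycleFlow g u v ≠ 0 := by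
  obtain ⟨⟨a, b, dir⟩, he⟩ := List.exists_mem_of_ne_nil g hg.1
  have hab := hconf _ he
  cases dir
  · have hF : (b, a, true) ∈ g → 0 < h b a := fun he => by simpa [ConformalStep] using hconf _ he
    refine ⟨b, a, ?_⟩
    simp only [cycleFlow_apply hg.nodup, ConformalStep] at hab ⊢
    split_ifs <;> grind
  · have hB : (b, a, false) ∈ g → h a b < 0 := fun he => by simpa [ConformalStep] using hconf _ he
    refine ⟨a, b, ?_⟩
    simp only [cycleFlow_apply hg.nodup, ConformalStep] at hab ⊢
    split_ifs <;> grind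

end ConformalFlow

theorem exists_residualCycle_map_neg (L : (V → V → ℤ) →+ ℤ) {c f : V → V → ℤ}
    (hf : WithinCapacity c f) (h : V → V → ℤ) (hcirc : netOut h = 0)
    (hfh : WithinCapacity c (f + h)) (hL : L h < 0) :
    ∃ g, ResidualCycle c f g ∧ L (cycleFlow g) < 0 := by
  induction hn : ∑ p : V × V, (h p.1 p.2).natAbs using Nat.strong_induction_on generalizing h with
  | _ n ih =>
  obtain ⟨g, hg, hconf⟩ := exists_conformal_cycle hcirc (by rintro rfl; simp at hL)
  have hres : ResidualCycle c f g :=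
    residualCycle_iff.2 ⟨hg, fun e he => (hconf e he).residualStep hfh⟩
  by_cases hgL : L (cycleFlow g) < 0
  · exact ⟨g, hres, hgL⟩
  have hpt := cycleFlow_apply_of_conformal hg.nodup hconf
  refine ih _ ?_ (h - cycleFlow g) ?_ ?_ ?_ rfl
  · obtain ⟨u, v, huv⟩ := exists_cycleFlow_ne_zero hg hconf
    rw [← hn]
    refine sum_lt_sum (fun p _ => ?_) ⟨(u, v), mem_univ _, ?_⟩
    · have := hpt p.1 p.2
      simp only [Pi.sub_apply]
      omega
    · have := hpt u v
      simp only [Pi.sub_apply]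
      omega
  · rw [map_sub, hcirc, netOut_cycleFlow hg, sub_zero]
  · intro u v
    have := hpt u v
    have := hf u v
    have := hfh u v
    simp only [Pi.add_apply, Pi.sub_apply] at this ⊢
    omega
  · rw [map_sub]
    linarith

def cost (X : Finset (V × V)) (f f' : V → V → ℤ) : (V → V → ℤ) →+ ℤ where
  toFun h := ∑ a ∈ X,
    (if f a.1 a.2 ≠ f' a.1 a.2 then -1 else 1) * (1 - 2 * f a.1 a.2) * h a.1 a.2
  map_zero' := by simp
  map_add' _ _ := by simp only [Pi.add_apply, mul_add, sum_add_distrib]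

section Cost

omit [Fintype V]

variable {c f f' : V → V → ℤ} {X : Finset (V × V)}

omit [DecidableEq V] in
lemma dist_sub_dist_eq_cost {F : V → V → ℤ} (hX : ∀ e ∈ X, c e.1 e.2 = 1)
    (hF : WithinCapacity c F) (hf : WithinCapacity c f) (hf' : WithinCapacity c f') :
    (dist X F f' : ℤ) - dist X f f' = cost X f f' (F - f) := by
  simp only [_root_.dist, natCast_card_filter, cost, AddMonoidHom.coe_mk, ZeroHom.coe_mk,
    Pi.sub_apply, ← sum_sub_distrib]
  refine sum_congr rfl fun a ha => ?_
  have := hX a ha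
  have := hF a.1 a.2
  have := hf' a.1 a.2
  obtain hf0 | hf1 : f a.1 a.2 = 0 ∨ f a.1 a.2 = 1 := by have := hf a.1 a.2; omega
  · rw [hf0]; split_ifs <;> omega
  · rw [hf1]; split_ifs <;> omega

lemma cost_push1_zero (hX : ∀ e ∈ X, c e.1 e.2 = 1) (hf : WithinCapacity c f)
    {e : V × V × Bool} (he : ResidualStep c f e) :
    cost X f f' (push1 0 e) = if arcOf e ∈ X then
      (if f (arcOf e).1 (arcOf e).2 ≠ f' (arcOf e).1 (arcOf e).2 then -1 else 1) else 0 := by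
  have hstep (u v : V) :
      push1 0 e u v = if (u, v) = arcOf e then (if e.2.2 then 1 else -1) else 0 := by
    rcases e with ⟨a, b, _ | _⟩ <;> simp [push1, arcOf]
  simp only [cost, AddMonoidHom.coe_mk, ZeroHom.coe_mk, hstep, Prod.mk.eta, mul_ite, mul_zero,
    sum_ite_eq']
  by_cases hX' : arcOf e ∈ X
  · have hcap := hX _ hX'
    have hfe := hf (arcOf e).1 (arcOf e).2
    have hval : f (arcOf e).1 (arcOf e).2 = if e.2.2 then 0 else 1 := by
      rcases e with ⟨a, b, _ | _⟩ <;> simp [ResidualStep, arcOf] at he hcap hfe ⊢ <;> omega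
    rw [if_pos hX', if_pos hX', hval]
    split_ifs <;> norm_num
  · rw [if_neg hX', if_neg hX']

lemma cost_cycleFlow (hX : ∀ e ∈ X, c e.1 e.2 = 1) (hf : WithinCapacity c f)
    {g : List (V × V × Bool)} (hres : ∀ e ∈ g, ResidualStep c f e) :
    cost X f f' (cycleFlow g) = cycleWeight X f f' g := by
  rw [cycleFlow, map_list_sum, List.map_map, cycleWeight]
  exact congrArg List.sum (List.map_congr_left fun e he => cost_push1_zero hX hf (hres e he))

end Cost

/-- the residual graph of a maximal flow `f` contains a simple cycle of
negative weight iff there is a maximal flow `f*` with `d(f*, f') < d(f, f')`. -/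
theorem stmt3 (s t : V) (c f f' : V → V → ℤ) (X : Finset (V × V))
    (hX : ∀ e ∈ X, c e.1 e.2 = 1)
    (hf : IsZMaxFlow c s t f) (hf' : IsZMaxFlow c s t f') :
    (∃ g : List (V × V × Bool), ResidualCycle c f g ∧ cycleWeight X f f' g < 0) ↔
      ∃ fstar : V → V → ℤ, IsZMaxFlow c s t fstar ∧ dist X fstar f' < dist X f f' := by
  have hdist {F} (hF : IsZMaxFlow c s t F) := dist_sub_dist_eq_cost hX hF.1.withinCapacity
    hf.1.withinCapacity hf'.1.withinCapacity
  constructor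
  · rintro ⟨g, hg, hneg⟩
    have hpush : (dist X (push f g) f' : ℤ) - dist X f f' = cycleWeight X f f' g := by
      rw [hdist (isZMaxFlow_push hf hg), push_eq_add_cycleFlow, add_sub_cancel_left,
        cost_cycleFlow hX hf.1.withinCapacity (residualCycle_iff.1 hg).2]
    exact ⟨push f g, isZMaxFlow_push hf hg, by omega⟩
  · rintro ⟨F, hF, hlt⟩
    obtain ⟨g, hg, hneg⟩ := exists_residualCycle_map_neg (cost X f f') hf.1.withinCapacity
      (F - f) (hF.netOut_sub_eq_zero hf) (by rw [add_sub_cancel]; exact hF.1.withinCapacity)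
      (by rw [← hdist hF]; omega)
    rw [cost_cycleFlow hX hf.1.withinCapacity (residualCycle_iff.1 hg).2] at hneg
    exact ⟨g, hg, hneg⟩
end

section
/- If an integral flow f of value ρ_N·P exists in G(s), then the induced assignment satisfies the scattering constraint: for every partition p, the set of zones of the nodes assigned to p has cardinality at least ρ_Z. -/
inductive Vert (P Z N : Type) where
  | src | snk
  | pp (p : P) | pm (p : P)
  | x (p : P) (z : Z)
  | node (n : N)
  deriving DecidableEq, Fintype

variable {P Z N : Type} [Fintype P] [Fintype Z] [Fintype N]
  [DecidableEq P] [DecidableEq Z] [DecidableEq N]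

/-- Capacities of the assignment flow graph `G(s)`. -/
def cap (zone : N → Z) (c : N → ℕ) (rN rZ s : ℕ) :
    Vert P Z N → Vert P Z N → ℕ
  | .src, .pp _ => rZ
  | .src, .pm _ => rN - rZ
  | .pp p, .x q _ => if p = q then 1 else 0
  | .pm p, .x q _ => if p = q then rN - rZ else 0
  | .x _ z, .node n => if zone n = z then 1 else 0
  | .node n, .snk => c n / s
  | _, _ => 0

/-- An integral flow on the graph with capacity function `k`. -/
def IsNFlow (k f : Vert P Z N → Vert P Z N → ℕ) : Prop :=
  (∀ u v, f u v ≤ k u v) ∧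
    ∀ v, v ≠ Vert.src → v ≠ Vert.snk → ∑ u, f u v = ∑ u, f v u

/-- The value of a flow: total flow leaving the source. -/
def flowValue (f : Vert P Z N → Vert P Z N → ℕ) : ℕ := ∑ v, f Vert.src v

/-! The flow leaves the source at full value `ρ_N · |P|` only if every arc `src → p⁺` is saturated,
because the two source arcs of a partition carry at most `ρ_Z + (ρ_N - ρ_Z) = ρ_N`. Conservation at
`p⁺` spreads these `ρ_Z` units over the unit-capacity arcs `p⁺ → x_{p,z}`, so at least `ρ_Z` zones
`z` receive flow, and conservation at each such `x_{p,z}` forwards its unit to a node of zone `z`,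
which is thereby assigned to `p`. -/

open Finset

theorem Finset.sum_le_card_filter_ne_zero {ι : Type*} (s : Finset ι) (g : ι → ℕ)
    (hg : ∀ i ∈ s, g i ≤ 1) : ∑ i ∈ s, g i ≤ #{i ∈ s | g i ≠ 0} := by
  rw [← sum_filter_ne_zero]
  simpa using sum_le_card_nsmul _ g 1 fun i hi => hg i (mem_filter.1 hi).1

section AssignmentGraph

variable {P Z N : Type} [Fintype P] [Fintype Z] [Fintype N]

theorem IsNFlow.eq_zero_of_cap_eq_zero {k f : Vert P Z N → Vert P Z N → ℕ} (hf : IsNFlow k f)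
    {u v : Vert P Z N} (h : k u v = 0) : f u v = 0 :=
  Nat.eq_zero_of_le_zero (h ▸ hf.1 u v)

variable [DecidableEq P] [DecidableEq Z]
  {zone : N → Z} {c : N → ℕ} {rN rZ s : ℕ} {f : Vert P Z N → Vert P Z N → ℕ}

theorem flowValue_eq_sum_src_pp_add_src_pm (hf : IsNFlow (cap zone c rN rZ s) f) :
    flowValue f = ∑ p, (f .src (.pp p) + f .src (.pm p)) := by
  have hinj : Function.Injective (Sum.elim Vert.pp Vert.pm : P ⊕ P → Vert P Z N) := by
    rintro (p | p) (q | q) h <;> simp_all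
  have hzero : ∀ v ∉ Set.range (Sum.elim Vert.pp Vert.pm), f .src v = 0 := fun v hv =>
    hf.eq_zero_of_cap_eq_zero (by cases v <;> simp_all [cap])
  rw [sum_add_distrib]
  exact (Fintype.sum_of_injective _ hinj _ _ hzero fun _ => rfl).symm.trans
    (Fintype.sum_sum_type _)

theorem src_pp_eq_of_flowValue_eq (h2 : rZ ≤ rN) (hf : IsNFlow (cap zone c rN rZ s) f)
    (hval : flowValue f = rN * Fintype.card P) (p : P) : f .src (.pp p) = rZ := by
  have hle : ∀ q ∈ univ, f .src (.pp q) + f .src (.pm q) ≤ rN := fun q _ => by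
    have hpp : f .src (.pp q) ≤ rZ := hf.1 _ _
    have hpm : f .src (.pm q) ≤ rN - rZ := hf.1 _ _
    omega
  have hsum : ∑ q, (f .src (.pp q) + f .src (.pm q)) = ∑ _q : P, rN := by
    rw [← flowValue_eq_sum_src_pp_add_src_pm hf, hval, sum_const, card_univ,
      smul_eq_mul, mul_comm]
  have hp := (sum_eq_sum_iff_of_le hle).1 hsum p (mem_univ p)
  have hpp : f .src (.pp p) ≤ rZ := hf.1 _ _
  have hpm : f .src (.pm p) ≤ rN - rZ := hf.1 _ _
  omega

theorem sum_pp_x_eq_src_pp (hf : IsNFlow (cap zone c rN rZ s) f) (p : P) :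
    ∑ z, f (.pp p) (.x p z) = f .src (.pp p) := by
  have hin : ∑ u, f u (.pp p) = f .src (.pp p) :=
    Fintype.sum_eq_single _ fun u hu => hf.eq_zero_of_cap_eq_zero (by cases u <;> simp_all [cap])
  have hout : ∑ z, f (.pp p) (.x p z) = ∑ v, f (.pp p) v := by
    refine Fintype.sum_of_injective (Vert.x p) (fun _ _ h => (Vert.x.inj h).2) _ _ ?_ fun _ => rfl
    intro v hv
    apply hf.eq_zero_of_cap_eq_zero
    cases v <;> simp_all [cap]
  rw [hout, ← hf.2 _ (by simp) (by simp), hin]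

theorem exists_node_of_pp_x_ne_zero (hf : IsNFlow (cap zone c rN rZ s) f) {p : P} {z : Z}
    (h : f (.pp p) (.x p z) ≠ 0) : ∃ n, zone n = z ∧ f (.x p z) (.node n) = 1 := by
  have hout : ∑ v, f (.x p z) v ≠ 0 := by
    rw [← hf.2 _ (by simp) (by simp)]
    exact fun h0 => h (sum_eq_zero_iff.1 h0 _ (mem_univ _))
  obtain ⟨v, -, hv⟩ := exists_ne_zero_of_sum_ne_zero hout
  have hcap := hf.1 (.x p z) v
  cases v with
  | node n =>
    by_cases hz : zone n = z
    · exact ⟨n, hz, by simp only [cap, hz, if_true] at hcap; omega⟩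
    · simp only [cap, hz, if_false] at hcap; omega
  | _ => simp only [cap] at hcap; omega

theorem filter_pp_x_ne_zero_subset_image_zone (hf : IsNFlow (cap zone c rN rZ s) f) (p : P) :
    ({z | f (.pp p) (.x p z) ≠ 0} : Finset Z) ⊆
      ({n | f (.x p (zone n)) (.node n) = 1} : Finset N).image zone := by
  intro z hz
  obtain ⟨n, rfl, hn⟩ := exists_node_of_pp_x_ne_zero hf (mem_filter.1 hz).2
  exact mem_image_of_mem zone (mem_filter.2 ⟨mem_univ n, hn⟩)

end AssignmentGraph

theorem stmt14_general (zone : N → Z) (c : N → ℕ) (rN rZ s : ℕ)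
    (h2 : rZ ≤ rN)
    (f : Vert P Z N → Vert P Z N → ℕ)
    (hf : IsNFlow (cap zone c rN rZ s) f)
    (hval : flowValue f = rN * Fintype.card P) :
    ∀ p : P,
      rZ ≤ (((Finset.univ.filter fun n : N =>
        f (Vert.x p (zone n)) (Vert.node n) = 1)).image zone).card := by
  intro p
  calc rZ = ∑ z, f (.pp p) (.x p z) := by
        rw [sum_pp_x_eq_src_pp hf, src_pp_eq_of_flowValue_eq h2 hf hval]
    _ ≤ #{z | f (.pp p) (.x p z) ≠ 0} :=
        sum_le_card_filter_ne_zero _ _ fun z _ => by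
          simpa [cap] using hf.1 (.pp p) (.x p z)
    _ ≤ _ := card_le_card (filter_pp_x_ne_zero_subset_image_zone hf p)

/-- a flow of value `ρ_N · P` in `G(s)` induces an assignment satisfying
the scattering constraint: each partition's assigned nodes span at least `ρ_Z` zones. -/
theorem stmt14 (zone : N → Z) (c : N → ℕ) (rN rZ s : ℕ)
    (h1 : 1 ≤ rZ) (h2 : rZ ≤ rN)
    (f : Vert P Z N → Vert P Z N → ℕ)
    (hf : IsNFlow (cap zone c rN rZ s) f)
    (hval : flowValue f = rN * Fintype.card P) :
    ∀ p : P,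
      rZ ≤ (((Finset.univ.filter fun n : N =>
        f (Vert.x p (zone n)) (Vert.node n) = 1)).image zone).card :=
  stmt14_general zone c rN rZ s h2 f hf hval
end

section
/- If an integral flow f of value ρ_N·P exists in G(s), then in the induced assignment every partition p is assigned to exactly ρ_N pairwise distinct nodes, and every node n is assigned at most ⌊c_n/s⌋ partitions. -/
variable {P Z N : Type} [Fintype P] [Fintype Z] [Fintype N]
  [DecidableEq P] [DecidableEq Z] [DecidableEq N]

lemma sum_of_inj {α β : Type*} [Fintype α] [Fintype β] [DecidableEq β]
    (ι : α → β) (hι : Function.Injective ι) (g : β → ℕ)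
    (h0 : ∀ v, (∀ a, ι a ≠ v) → g v = 0) :
    ∑ v, g v = ∑ a, g (ι a) := by
  rw [← Finset.sum_image (g := ι) (f := g) (fun a _ b _ h => hι h)]
  refine (Finset.sum_subset (Finset.subset_univ _) ?_).symm
  intro v _ hv
  exact h0 v fun a ha => hv (Finset.mem_image.mpr ⟨a, Finset.mem_univ a, ha⟩)

/-- a flow of value `ρ_N · P` in `G(s)` induces an assignment where every
partition gets exactly `ρ_N` distinct nodes and every node `n` stores at most
`⌊c_n / s⌋` partitions. -/
theorem stmt15 (zone : N → Z) (c : N → ℕ) (rN rZ s : ℕ)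
    (h1 : 1 ≤ rZ) (h2 : rZ ≤ rN)
    (f : Vert P Z N → Vert P Z N → ℕ)
    (hf : IsNFlow (cap zone c rN rZ s) f)
    (hval : flowValue f = rN * Fintype.card P) :
    (∀ p : P, (Finset.univ.filter fun n : N =>
        f (Vert.x p (zone n)) (Vert.node n) = 1).card = rN) ∧
      ∀ n : N, (Finset.univ.filter fun p : P =>
        f (Vert.x p (zone n)) (Vert.node n) = 1).card ≤ c n / s := by
  obtain ⟨hcap, hcons⟩ := hf
  have z0 : ∀ u v, cap zone c rN rZ s u v = 0 → f u v = 0 := by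
    intro u v h
    have := hcap u v
    omega
  -- flow into pp p is f src (pp p)
  have hin_pp : ∀ p : P, ∑ u, f u (Vert.pp p) = f Vert.src (Vert.pp p) := by
    intro p
    refine Finset.sum_eq_single Vert.src ?_ (by simp)
    rintro u - hu
    cases u with
    | src => exact absurd rfl hu
    | _ => exact z0 _ _ rfl
  have hin_pm : ∀ p : P, ∑ u, f u (Vert.pm p) = f Vert.src (Vert.pm p) := by
    intro p
    refine Finset.sum_eq_single Vert.src ?_ (by simp)
    rintro u - hu
    cases u with
    | src => exact absurd rfl hu
    | _ => exact z0 _ _ rfl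
  -- flow out of pp p
  have hout_pp : ∀ p : P, ∑ u, f (Vert.pp p) u = ∑ z : Z, f (Vert.pp p) (Vert.x p z) := by
    intro p
    refine sum_of_inj (Vert.x p) (fun a b h => by cases h; rfl) _ ?_
    intro v hv
    cases v with
    | x q z =>
        refine z0 _ _ ?_
        have hq : p ≠ q := fun h => hv z (by rw [h])
        simp [cap, hq]
    | _ => exact z0 _ _ rfl
  have hout_pm : ∀ p : P, ∑ u, f (Vert.pm p) u = ∑ z : Z, f (Vert.pm p) (Vert.x p z) := by
    intro p
    refine sum_of_inj (Vert.x p) (fun a b h => by cases h; rfl) _ ?_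
    intro v hv
    cases v with
    | x q z =>
        refine z0 _ _ ?_
        have hq : p ≠ q := fun h => hv z (by rw [h])
        simp [cap, hq]
    | _ => exact z0 _ _ rfl
  -- flow into x p z
  have hin_x : ∀ (p : P) (z : Z),
      ∑ u, f u (Vert.x p z) = f (Vert.pp p) (Vert.x p z) + f (Vert.pm p) (Vert.x p z) := by
    intro p z
    have := sum_of_inj (α := Bool) (fun b => if b then Vert.pp p else Vert.pm p)
      (fun a b h => by cases a <;> cases b <;> simp_all) (fun v => f v (Vert.x p z)) ?_
    · rw [this, Fintype.sum_bool]; simp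
    · intro v hv
      cases v with
      | pp q =>
          refine z0 _ _ ?_
          have hq : q ≠ p := fun h => hv true (by simp [h])
          simp [cap, hq]
      | pm q =>
          refine z0 _ _ ?_
          have hq : q ≠ p := fun h => hv false (by simp [h])
          simp [cap, hq]
      | _ => exact z0 _ _ rfl
  -- flow out of x p z
  have hout_x : ∀ (p : P) (z : Z),
      ∑ u, f (Vert.x p z) u = ∑ n : N, f (Vert.x p z) (Vert.node n) := by
    intro p z
    refine sum_of_inj Vert.node (fun a b h => by cases h; rfl) _ ?_
    intro v hv
    cases v with
    | node n => exact absurd rfl (hv n)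
    | _ => exact z0 _ _ rfl
  -- flow into node n
  have hin_node : ∀ n : N,
      ∑ u, f u (Vert.node n) = ∑ p : P, f (Vert.x p (zone n)) (Vert.node n) := by
    intro n
    have := sum_of_inj (α := P × Z) (fun pz => Vert.x pz.1 pz.2)
      (fun a b h => by
        obtain ⟨a1, a2⟩ := a; obtain ⟨b1, b2⟩ := b
        simpa [Prod.ext_iff] using h) (fun v => f v (Vert.node n)) ?_
    · rw [this, Fintype.sum_prod_type]
      refine Finset.sum_congr rfl fun p _ => ?_
      refine Finset.sum_eq_single (zone n) ?_ (by simp)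
      rintro z - hz
      refine z0 _ _ ?_
      have hne : zone n ≠ z := fun h => hz h.symm
      simp [cap, hne]
    · intro v hv
      cases v with
      | x p z => exact absurd rfl (hv (p, z))
      | _ => exact z0 _ _ rfl
  -- flow out of node n
  have hout_node : ∀ n : N, ∑ u, f (Vert.node n) u = f (Vert.node n) Vert.snk := by
    intro n
    refine Finset.sum_eq_single Vert.snk ?_ (by simp)
    rintro u - hu
    cases u with
    | snk => exact absurd rfl hu
    | _ => exact z0 _ _ rfl
  -- the value equation: saturation of source edges
  have hsrc : ∀ p : P, f Vert.src (Vert.pp p) = rZ ∧ f Vert.src (Vert.pm p) = rN - rZ := by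
    have hv : ∑ p : P, (f Vert.src (Vert.pp p) + f Vert.src (Vert.pm p)) = ∑ p : P, rN := by
      have hsum : ∑ v, f Vert.src v
          = ∑ a : P ⊕ P, f Vert.src (Sum.elim Vert.pp Vert.pm a) := by
        refine sum_of_inj (Sum.elim Vert.pp Vert.pm)
          (fun a b h => by cases a <;> cases b <;> simp_all) _ ?_
        intro v hv
        cases v with
        | pp q => exact absurd rfl (hv (Sum.inl q))
        | pm q => exact absurd rfl (hv (Sum.inr q))
        | _ => exact z0 _ _ rfl
      rw [flowValue, hsum, Fintype.sum_sum_type] at hval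
      simp only [Sum.elim_inl, Sum.elim_inr] at hval
      rw [Finset.sum_add_distrib, hval]
      simp [Finset.sum_const, mul_comm]
    have := (Finset.sum_eq_sum_iff_of_le (fun p _ => by
      have h3 := hcap Vert.src (Vert.pp p)
      have h4 := hcap Vert.src (Vert.pm p)
      simp only [cap] at h3 h4
      omega)).mp hv
    intro p
    have hp := this p (Finset.mem_univ p)
    have h3 := hcap Vert.src (Vert.pp p)
    have h4 := hcap Vert.src (Vert.pm p)
    simp only [cap] at h3 h4
    omega
  constructor
  · intro p
    have e1 : ∑ z : Z, f (Vert.pp p) (Vert.x p z) = rZ := by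
      have := hcons (Vert.pp p) (by simp) (by simp)
      rw [hin_pp, hout_pp, (hsrc p).1] at this
      omega
    have e2 : ∑ z : Z, f (Vert.pm p) (Vert.x p z) = rN - rZ := by
      have := hcons (Vert.pm p) (by simp) (by simp)
      rw [hin_pm, hout_pm, (hsrc p).2] at this
      omega
    have e3 : ∑ z : Z, ∑ n : N, f (Vert.x p z) (Vert.node n) = rN := by
      have : ∀ z : Z, ∑ n : N, f (Vert.x p z) (Vert.node n)
          = f (Vert.pp p) (Vert.x p z) + f (Vert.pm p) (Vert.x p z) := by
        intro z
        have := hcons (Vert.x p z) (by simp) (by simp)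
        rw [hin_x, hout_x] at this
        omega
      rw [Finset.sum_congr rfl fun z _ => this z, Finset.sum_add_distrib, e1, e2]
      omega
    have e4 : ∑ n : N, f (Vert.x p (zone n)) (Vert.node n) = rN := by
      rw [← e3, Finset.sum_comm]
      refine Finset.sum_congr rfl fun n _ => Eq.symm ?_
      refine Finset.sum_eq_single (zone n) ?_ (by simp)
      rintro z - hz
      refine z0 _ _ ?_
      have hne : zone n ≠ z := fun h => hz h.symm
      simp [cap, hne]
    rw [← e4, Finset.card_filter]
    refine Finset.sum_congr rfl fun n _ => ?_
    have hb := hcap (Vert.x p (zone n)) (Vert.node n)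
    simp [cap] at hb
    split_ifs with h <;> omega
  · intro n
    have := hcons (Vert.node n) (by simp) (by simp)
    rw [hin_node, hout_node] at this
    have hb := hcap (Vert.node n) Vert.snk
    simp only [cap] at hb
    have hb1 : ∀ p : P, f (Vert.x p (zone n)) (Vert.node n) ≤ 1 := fun p => by
      have := hcap (Vert.x p (zone n)) (Vert.node n)
      simpa [cap] using this
    have hcard : (Finset.univ.filter fun p : P =>
        f (Vert.x p (zone n)) (Vert.node n) = 1).card
        ≤ ∑ p : P, f (Vert.x p (zone n)) (Vert.node n) := by
      rw [Finset.card_filter]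
      refine Finset.sum_le_sum fun p _ => ?_
      have := hb1 p
      split_ifs with h <;> omega
    omega
end
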